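/- arXiv:1808.09927 — 2 statements merged into one kernel-verified Lean document; each statement's English description precedes it below -/
import Mathlib

section
/- Reversing all edges of a directed cut in an oriented graph changes the associated divisor v ↦ indeg(v) − 1 by a principal divisor (an element of the image of the Laplacian): specifically, if all edges of the cut are directed from S to its complement, reversing them changes the divisor by Δ(𝟙_S). -/
/-!
Write `Δ f (v) = ∑_w m(v,w) (f v - f w)`. Summing edge by edge instead of neighbour by neighbour
gives `Δ f (v) = ∑_e (f (tail e) - f (head e)) · ∂(e, v)`, where `∂(e, v) = [tail e = v] - [head e = v]`
is the signed incidence (the factorization `Δ = ∂ ∂ᵀ`). For `f = 𝟙_S` the first factor is `1` on the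
edges leaving `S` and `0` on all others, because no edge enters `S`. Reversing the edges leaving `S`
changes the indegree at `v` by `∂(e, v)` for each such edge `e` and leaves the others unchanged.
-/

open Finset

section Incidence

variable {V E : Type*} [DecidableEq V]

def incidence (head tail : E → V) (e : E) (v : V) : ℤ :=
  (if tail e = v then 1 else 0) - (if head e = v then 1 else 0)

theorem sum_ite_joins_mul_sub [Fintype V] (head tail : E → V) (e : E) (f : V → ℤ) (v : V) :
    (∑ w : V, if (tail e = v ∧ head e = w) ∨ (tail e = w ∧ head e = v) then f v - f w else 0)
      = (f (tail e) - f (head e)) * incidence head tail e v := by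
  -- A loop at `v` is counted once on the left but twice below; harmless since `f v - f v = 0`.
  have split_joins : ∀ w : V,
      (if (tail e = v ∧ head e = w) ∨ (tail e = w ∧ head e = v) then f v - f w else 0)
        = (if w = head e then (if tail e = v then f v - f w else 0) else 0)
          + (if w = tail e then (if head e = v then f v - f w else 0) else 0) := by
    intro w
    by_cases hh : w = head e <;> by_cases ht : w = tail e <;> simp_all [eq_comm]
  simp only [split_joins, sum_add_distrib, sum_ite_eq', incidence]
  split_ifs <;> simp_all

theorem laplacian_eq_sum_incidence [Fintype V] [Fintype E] (head tail : E → V) (f : V → ℤ)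
    (v : V) :
    ∑ w : V, (#{e | (tail e = v ∧ head e = w) ∨ (tail e = w ∧ head e = v)} : ℤ) * (f v - f w)
      = ∑ e : E, (f (tail e) - f (head e)) * incidence head tail e v := by
  simp only [natCast_card_filter, sum_mul, ite_mul, one_mul, zero_mul]
  rw [sum_comm]
  exact sum_congr rfl fun e _ => sum_ite_joins_mul_sub head tail e f v

end Incidence

theorem ite_reverse_head_sub_ite_head {V : Type*} [DecidableEq V] (S : Finset V) {t h : V}
    (hcut : h ∈ S → t ∈ S) (v : V) :
    (if (if t ∈ S ∧ h ∉ S then t else h) = v then 1 else 0) - (if h = v then 1 else 0)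
      = ((if t ∈ S then 1 else 0) - (if h ∈ S then 1 else 0))
        * ((if t = v then 1 else 0) - (if h = v then 1 else 0) : ℤ) := by
  by_cases ht : t ∈ S <;> by_cases hh : h ∈ S <;> simp_all

theorem directed_cut_reversal_divisor_general {V E : Type*} [Fintype V] [Fintype E]
    [DecidableEq V]
    (head tail : E → V)
    (S : Finset V)
    (hcut : ∀ e, head e ∈ S → tail e ∈ S)  -- no edge enters S: every cut edge leaves S
    (head' : E → V)
    (hhead' : ∀ e, head' e = if tail e ∈ S ∧ head e ∉ S then tail e else head e)
    (indeg indeg' : V → ℤ)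
    (hindeg : ∀ w, indeg w = (univ.filter (fun e => head e = w)).card)
    (hindeg' : ∀ w, indeg' w = (univ.filter (fun e => head' e = w)).card)
    (m : V → V → ℤ)
    (hm : ∀ u v, m u v =
      (univ.filter (fun e => (tail e = u ∧ head e = v) ∨ (tail e = v ∧ head e = u))).card)
    (indicator : V → ℤ) (hind : ∀ v, indicator v = if v ∈ S then 1 else 0) :
    ∀ v, (indeg' v - 1) - (indeg v - 1) =
      ∑ w : V, m v w * (indicator v - indicator w) := by
  intro v
  calc (indeg' v - 1) - (indeg v - 1)
      = ∑ e : E, ((if head' e = v then 1 else 0) - (if head e = v then 1 else 0)) := by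
        rw [sum_sub_distrib, hindeg, hindeg', natCast_card_filter, natCast_card_filter]
        ring
    _ = ∑ e : E, (indicator (tail e) - indicator (head e)) * incidence head tail e v := by
        refine sum_congr rfl fun e _ => ?_
        rw [hhead', hind, hind, incidence]
        exact ite_reverse_head_sub_ite_head S (hcut e) v
    _ = ∑ w : V, m v w * (indicator v - indicator w) := by
        simp only [hm]
        exact (laplacian_eq_sum_incidence head tail indicator v).symm

/-- Reversing all edges of a directed cut (all edges between `S` and its complement being
directed out of `S`) changes the divisor `v ↦ indeg v - 1` by the principal divisor
`Δ(𝟙_S)`, where `Δ` is the graph Laplacian of the underlying multigraph. -/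
theorem directed_cut_reversal_divisor {V E : Type*} [Fintype V] [Fintype E]
    [DecidableEq V] [DecidableEq E]
    (head tail : E → V) (hloop : ∀ e, head e ≠ tail e)
    (S : Finset V)
    (hcut : ∀ e, head e ∈ S → tail e ∈ S)  -- no edge enters S: every cut edge leaves S
    (head' tail' : E → V)
    (hhead' : ∀ e, head' e = if tail e ∈ S ∧ head e ∉ S then tail e else head e)
    (htail' : ∀ e, tail' e = if tail e ∈ S ∧ head e ∉ S then head e else tail e)
    (indeg indeg' : V → ℤ)
    (hindeg : ∀ w, indeg w = (univ.filter (fun e => head e = w)).card)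
    (hindeg' : ∀ w, indeg' w = (univ.filter (fun e => head' e = w)).card)
    (m : V → V → ℤ)
    (hm : ∀ u v, m u v =
      (univ.filter (fun e => (tail e = u ∧ head e = v) ∨ (tail e = v ∧ head e = u))).card)
    (indicator : V → ℤ) (hind : ∀ v, indicator v = if v ∈ S then 1 else 0) :
    ∀ v, (indeg' v - 1) - (indeg v - 1) =
      ∑ w : V, m v w * (indicator v - indicator w) :=
  directed_cut_reversal_divisor_general head tail S hcut head' hhead' indeg indeg' hindeg hindeg' m
    hm indicator hind
end

section
/- If two orientations O and O' of a finite connected graph G are related by a sequence of directed cycle reversals and directed cut reversals, then their associated divisors D_O and D_{O'} (given by v ↦ indeg(v) − 1) are linearly equivalent, i.e., D_O − D_{O'} ∈ Prin(G). -/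
/-!
Let `B` be the signed incidence matrix of an orientation, `B v e = [tail e = v] - [head e = v]`.
The Laplacian of the underlying multigraph is `B Bᵀ`, and it is unchanged by reversing edges.
Reversing a set `C` of edges changes the indegree vector by `B 1_C`. For a directed cycle this
vanishes, since every vertex of the cycle has one incoming and one outgoing edge in `C`. For the
directed cut leaving `S`, `1_C = -Bᵀ 1_{V \ S}`, so the change is `-B Bᵀ 1_{V \ S}`, a principal
divisor.
-/

open Finset

variable {V E : Type*} [Fintype V] [Fintype E] [DecidableEq V] [DecidableEq E]

/-- The indegree of `v` in the orientation `o` (where `(o e).1` is the tail of the edge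
`e` and `(o e).2` is its head). -/
def orientIndeg (o : E → V × V) (v : V) : ℕ :=
  (univ.filter (fun e => (o e).2 = v)).card

/-- `o'` is obtained from `o` by reversing all edges of a directed cycle: a set of edges
each of whose incident vertices has exactly one incoming and one outgoing edge in it. -/
def CycleReversal (o o' : E → V × V) : Prop :=
  ∃ C : Finset E,
    (∀ v : V, (∃ e ∈ C, (o e).1 = v ∨ (o e).2 = v) →
      (C.filter (fun e => (o e).2 = v)).card = 1 ∧
      (C.filter (fun e => (o e).1 = v)).card = 1) ∧
    ∀ e, o' e = if e ∈ C then ((o e).2, (o e).1) else o e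

/-- `o'` is obtained from `o` by reversing all edges of a directed cut: for some vertex
set `S` with no edge directed into `S` from outside, all edges from `S` to its complement
are reversed. -/
def CutReversal (o o' : E → V × V) : Prop :=
  ∃ S : Finset V,
    (∀ e, (o e).2 ∈ S → (o e).1 ∈ S) ∧
    ∀ e, o' e = if (o e).1 ∈ S ∧ (o e).2 ∉ S then ((o e).2, (o e).1) else o e

def orientIncidence (o : E → V × V) (v : V) (e : E) : ℤ :=
  (if (o e).1 = v then 1 else 0) - (if (o e).2 = v then 1 else 0)

def orientLaplacian (o : E → V × V) (f : V → ℤ) (v : V) : ℤ :=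
  ∑ e, orientIncidence o v e * (f (o e).1 - f (o e).2)

omit [Fintype V] [DecidableEq E] in
lemma orientLaplacian_zero (o : E → V × V) : orientLaplacian o 0 = 0 := by
  ext v; simp [orientLaplacian]

omit [Fintype V] [DecidableEq E] in
lemma orientLaplacian_add (o : E → V × V) (f g : V → ℤ) :
    orientLaplacian o (f + g) = orientLaplacian o f + orientLaplacian o g := by
  ext v
  simp only [orientLaplacian, Pi.add_apply, ← sum_add_distrib]
  exact sum_congr rfl fun e _ => by ring

omit [Fintype V] [DecidableEq E] in
lemma orientLaplacian_eq_of_forall_eq_or_eq_swap {o o' : E → V × V}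
    (h : ∀ e, o' e = o e ∨ o' e = (o e).swap) : orientLaplacian o' = orientLaplacian o := by
  ext f v
  refine sum_congr rfl fun e _ => ?_
  rcases h e with he | he <;> simp only [orientIncidence, he, Prod.fst_swap, Prod.snd_swap]
  ring

omit [DecidableEq E] in
lemma sum_card_mul_sub_eq_orientLaplacian (o : E → V × V) (f : V → ℤ) (v : V) :
    ∑ w, (#{e | ((o e).1 = v ∧ (o e).2 = w) ∨ ((o e).1 = w ∧ (o e).2 = v)} : ℤ) *
        (f v - f w) =
      orientLaplacian o f v := by
  simp only [card_filter, Nat.cast_sum, Nat.cast_ite, Nat.cast_one, Nat.cast_zero, sum_mul,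
    orientLaplacian]
  rw [sum_comm]
  refine sum_congr rfl fun e _ => ?_
  by_cases ht : (o e).1 = v <;> by_cases hh : (o e).2 = v
  all_goals simp [orientIncidence, ht, hh]

omit [Fintype V] in
lemma natCast_orientIndeg_sub_of_reverse {o o' : E → V × V} (C : Finset E)
    (h : ∀ e, o' e = if e ∈ C then (o e).swap else o e) (v : V) :
    (orientIndeg o' v : ℤ) - orientIndeg o v = ∑ e ∈ C, orientIncidence o v e := by
  rw [← univ_inter C, ← sum_ite_mem]
  simp only [orientIndeg, card_filter]
  push_cast
  rw [← sum_sub_distrib]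
  refine sum_congr rfl fun e _ => ?_
  by_cases he : e ∈ C <;> simp [h, he, orientIncidence]

omit [Fintype V] [Fintype E] [DecidableEq E] in
lemma sum_orientIncidence_eq_zero_of_cycle {o : E → V × V} {C : Finset E}
    (hC : ∀ v : V, (∃ e ∈ C, (o e).1 = v ∨ (o e).2 = v) →
      #(C.filter (fun e => (o e).2 = v)) = 1 ∧ #(C.filter (fun e => (o e).1 = v)) = 1) (v : V) :
    ∑ e ∈ C, orientIncidence o v e = 0 := by
  simp only [orientIncidence, sum_sub_distrib, sum_boole]
  by_cases hv : ∃ e ∈ C, (o e).1 = v ∨ (o e).2 = v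
  · simp [hC v hv]
  · push Not at hv
    simp [filter_false_of_mem fun e he => (hv e he).1, filter_false_of_mem fun e he => (hv e he).2]

omit [Fintype V] in
lemma exists_orientLaplacian_eq_of_cutReversal {o o' : E → V × V} (h : CutReversal o o') :
    ∃ g : V → ℤ, ∀ v,
      (orientIndeg o v : ℤ) - orientIndeg o' v = orientLaplacian o g v := by
  obtain ⟨S, hS, ho'⟩ := h
  refine ⟨fun v => if v ∈ S then 0 else 1, fun v => ?_⟩
  rw [← neg_sub, natCast_orientIndeg_sub_of_reverse {e | (o e).1 ∈ S ∧ (o e).2 ∉ S}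
    (fun e => by simp [ho' e, Prod.swap]) v, orientLaplacian, ← sum_neg_distrib, sum_filter]
  refine sum_congr rfl fun e _ => ?_
  have hinto := hS e
  by_cases ht : (o e).1 ∈ S <;> by_cases hh : (o e).2 ∈ S <;> simp_all

omit [Fintype V] in
lemma exists_orientLaplacian_eq_of_reversal {o o' : E → V × V}
    (h : CycleReversal o o' ∨ CutReversal o o') :
    ∃ g : V → ℤ, ∀ v,
      (orientIndeg o v : ℤ) - orientIndeg o' v = orientLaplacian o g v := by
  rcases h with ⟨C, hC, ho'⟩ | hcut
  · refine ⟨0, fun v => ?_⟩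
    rw [orientLaplacian_zero, Pi.zero_apply, ← neg_sub,
      natCast_orientIndeg_sub_of_reverse C ho' v, sum_orientIncidence_eq_zero_of_cycle hC v,
      neg_zero]
  · exact exists_orientLaplacian_eq_of_cutReversal hcut

omit [Fintype V] [Fintype E] in
lemma forall_eq_or_eq_swap_of_reversal {o o' : E → V × V}
    (h : CycleReversal o o' ∨ CutReversal o o') (e : E) : o' e = o e ∨ o' e = (o e).swap := by
  rcases h with ⟨C, -, ho'⟩ | ⟨S, -, ho'⟩ <;> rw [ho' e] <;> split <;> simp [Prod.swap]

omit [Fintype V] in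
lemma orientLaplacian_eq_of_reflTransGen {o o' : E → V × V}
    (h : Relation.ReflTransGen
      (fun o o' : E → V × V => CycleReversal o o' ∨ CutReversal o o') o o') :
    orientLaplacian o' = orientLaplacian o := by
  induction h with
  | refl => rfl
  | tail _ hstep ih =>
    rw [orientLaplacian_eq_of_forall_eq_or_eq_swap (forall_eq_or_eq_swap_of_reversal hstep), ih]

/-- If two orientations of a finite graph are related by a sequence of directed cycle
reversals and directed cut reversals, then their divisors `v ↦ indeg v - 1` differ by a
principal divisor (an image of the Laplacian of the underlying multigraph). -/
theorem divisors_linearly_equivalent_of_reversals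
    (O O' : E → V × V)
    (hrel : Relation.ReflTransGen
      (fun o o' : E → V × V => CycleReversal o o' ∨ CutReversal o o') O O')
    (m : V → V → ℤ)
    (hm : ∀ u v, m u v = (univ.filter
      (fun e => ((O e).1 = u ∧ (O e).2 = v) ∨ ((O e).1 = v ∧ (O e).2 = u))).card) :
    ∃ f : V → ℤ, ∀ v,
      ((orientIndeg O v : ℤ) - 1) - ((orientIndeg O' v : ℤ) - 1) =
        ∑ w : V, m v w * (f v - f w) := by
  simp only [hm, sum_card_mul_sub_eq_orientLaplacian, sub_sub_sub_cancel_right]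
  induction hrel with
  | refl => exact ⟨0, by simp [orientLaplacian_zero]⟩
  | tail hOb hbc ih =>
    obtain ⟨f, hf⟩ := ih
    obtain ⟨g, hg⟩ := exists_orientLaplacian_eq_of_reversal hbc
    refine ⟨f + g, fun v => ?_⟩
    rw [orientLaplacian_add, Pi.add_apply, ← hf, ← orientLaplacian_eq_of_reflTransGen hOb,
      ← hg]
    ring
end
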